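/- arXiv:2201.10408 — 5 statements merged into one kernel-verified Lean document; each statement's English description precedes it below -/
import Mathlib

section
/- Let f* : X → Y be a model such that for every group g : X → Bool with μ_g(D) > 0 and every model h : X → Y, L(D, f*, g) ≤ L(D, h, g). Then f* is Bayes optimal with respect to D and ℓ. -/
open MeasureTheory

/-- The measure of a group `g` under a distribution `D` on `X × Y`:
`μ_g(D) = D {(x,y) | g x = true}`. -/
noncomputable def groupMeasure {X Y : Type} [MeasurableSpace (X × Y)]
    (D : Measure (X × Y)) (g : X → Bool) : ℝ :=
  (D {p : X × Y | g p.1 = true}).toReal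

/-- The group-conditional loss `L(D, f, g) = E_{(x,y)∼D}[ℓ(f x, y) | g x = true]`,
written on a finite type as the `g`-restricted sum divided by the mass of `g`. -/
noncomputable def condLoss {X Y : Type} [Fintype X] [Fintype Y] [MeasurableSpace (X × Y)]
    (D : Measure (X × Y)) (ℓ : Y → Y → ℝ) (f : X → Y) (g : X → Bool) : ℝ :=
  (∑ p : X × Y, if g p.1 = true then (D {p}).toReal * ℓ (f p.1) p.2 else 0)
    / groupMeasure D g

/-- A model `f` is Bayes optimal with respect to `D` and `ℓ` if for every `x` with
`D({x} × Y) > 0` and every `y`, `Σ_{y'} D{(x,y')}·ℓ(f x, y') ≤ Σ_{y'} D{(x,y')}·ℓ(y, y')`. -/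
def BayesOptimal {X Y : Type} [Fintype X] [Fintype Y] [MeasurableSpace (X × Y)]
    (D : Measure (X × Y)) (ℓ : Y → Y → ℝ) (f : X → Y) : Prop :=
  ∀ x : X, 0 < D {p : X × Y | p.1 = x} →
    ∀ y : Y, ∑ y' : Y, (D {(x, y')}).toReal * ℓ (f x) y'
      ≤ ∑ y' : Y, (D {(x, y')}).toReal * ℓ y y'

/- The group `{x}` of a single point has conditional loss equal to the Bayes risk of the
prediction at `x`, normalised by the mass of `x`; so group-wise optimality on every singleton is
pointwise optimality, which is Bayes optimality. -/

section SingletonGroup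

variable {X Y : Type} [DecidableEq X] [MeasurableSpace (X × Y)]

def singletonGroup (x : X) : X → Bool := fun x' => decide (x' = x)

theorem groupMeasure_singletonGroup (D : Measure (X × Y)) (x : X) :
    groupMeasure D (singletonGroup x) = (D {p : X × Y | p.1 = x}).toReal := by
  simp [groupMeasure, singletonGroup]

theorem groupMeasure_singletonGroup_pos (D : Measure (X × Y)) [IsFiniteMeasure D] {x : X}
    (hx : 0 < D {p : X × Y | p.1 = x}) : 0 < groupMeasure D (singletonGroup x) := by
  rw [groupMeasure_singletonGroup]
  exact ENNReal.toReal_pos hx.ne' (measure_ne_top _ _)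

theorem condLoss_singletonGroup [Fintype X] [Fintype Y] (D : Measure (X × Y)) (ℓ : Y → Y → ℝ) (f : X → Y) (x : X) :
    condLoss D ℓ f (singletonGroup x)
      = (∑ y' : Y, (D {(x, y')}).toReal * ℓ (f x) y') / groupMeasure D (singletonGroup x) := by
  rw [condLoss, Fintype.sum_prod_type, Finset.sum_eq_single x]
  · simp [singletonGroup]
  · intro x' _ hx'
    simp [singletonGroup, hx']
  · simp

end SingletonGroup

theorem stmt_1_general {X Y : Type} [Fintype X] [Fintype Y]
    [MeasurableSpace (X × Y)]
    (D : Measure (X × Y)) [IsProbabilityMeasure D]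
    (ℓ : Y → Y → ℝ)
    (fstar : X → Y)
    (hgrp : ∀ g : X → Bool, 0 < groupMeasure D g →
      ∀ h : X → Y, condLoss D ℓ fstar g ≤ condLoss D ℓ h g) :
    BayesOptimal D ℓ fstar := by
  classical
  intro x hx y
  have hμ := groupMeasure_singletonGroup_pos D hx
  have hopt := hgrp (singletonGroup x) hμ (fun _ => y)
  rwa [condLoss_singletonGroup, condLoss_singletonGroup,
    div_le_div_iff_of_pos_right hμ] at hopt

/-- a model with optimal loss on every group of positive measure is Bayes optimal. -/
theorem stmt_1 {X Y : Type} [Fintype X] [Fintype Y] [Nonempty X] [Nonempty Y]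
    [MeasurableSpace (X × Y)] [MeasurableSingletonClass (X × Y)]
    (D : Measure (X × Y)) [IsProbabilityMeasure D]
    (ℓ : Y → Y → ℝ) (hℓ : ∀ yhat y : Y, 0 ≤ ℓ yhat y ∧ ℓ yhat y ≤ 1)
    (fstar : X → Y)
    (hgrp : ∀ g : X → Bool, 0 < groupMeasure D g →
      ∀ h : X → Y, condLoss D ℓ fstar g ≤ condLoss D ℓ h g) :
    BayesOptimal D ℓ fstar :=
  stmt_1_general D ℓ fstar hgrp
end

section
/- Let f : X → Y be a model and suppose the pair (g,h) is a (μ,Δ)-certificate of sub-optimality for f with μ > 0 and Δ > 0. Then the model f' := ListUpdate(f,(g,h)) satisfies L(D, f') ≤ L(D, f) − μ·Δ. -/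
open MeasureTheory

/-- The overall loss `L(D,f) = E_{(x,y)∼D}[ℓ(f x, y)]` on a finite type. -/
noncomputable def totalLoss {X Y : Type} [Fintype X] [Fintype Y] [MeasurableSpace (X × Y)]
    (D : Measure (X × Y)) (ℓ : Y → Y → ℝ) (f : X → Y) : ℝ :=
  ∑ p : X × Y, (D {p}).toReal * ℓ (f p.1) p.2

/-- `ListUpdate(f,(g,h))`: predict with `h` on group `g`, and with `f` elsewhere. -/
def listUpdate {X Y : Type} (f h : X → Y) (g : X → Bool) : X → Y :=
  fun x => if g x then h x else f x

/-- `(g,h)` is a `(μ,Δ)`-certificate of sub-optimality for `f` under `D`: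
`μ_g(D) ≥ μ` and `L(D,f,g) ≥ L(D,h,g) + Δ`. -/
def IsCertificate {X Y : Type} [Fintype X] [Fintype Y] [MeasurableSpace (X × Y)]
    (D : Measure (X × Y)) (ℓ : Y → Y → ℝ) (f : X → Y)
    (g : X → Bool) (h : X → Y) (μ Δ : ℝ) : Prop :=
  μ ≤ groupMeasure D g ∧ condLoss D ℓ h g + Δ ≤ condLoss D ℓ f g

/-- `f` is `(ε,C)`-Bayes optimal: for every `(g,h) ∈ C` with `μ_g(D) > 0`,
`L(D,f,g) ≤ L(D,h,g) + ε/μ_g(D)`. -/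
def ApproxBayesOptimal {X Y : Type} [Fintype X] [Fintype Y] [MeasurableSpace (X × Y)]
    (D : Measure (X × Y)) (ℓ : Y → Y → ℝ)
    (C : Set ((X → Bool) × (X → Y))) (ε : ℝ) (f : X → Y) : Prop :=
  ∀ gh ∈ C, 0 < groupMeasure D gh.1 →
    condLoss D ℓ f gh.1 ≤ condLoss D ℓ gh.2 gh.1 + ε / groupMeasure D gh.1

/-! Outside `g` the updated model agrees with `f`, so the update changes only the
`g`-restricted part of the loss, which is `μ_g(D)` times the conditional loss. The gain is
therefore `μ_g(D) · (L(D,f,g) - L(D,h,g)) ≥ μ · Δ`. -/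

noncomputable def groupLoss {X Y : Type} [Fintype X] [Fintype Y] [MeasurableSpace (X × Y)]
    (D : Measure (X × Y)) (ℓ : Y → Y → ℝ) (f : X → Y) (g : X → Bool) : ℝ :=
  ∑ p : X × Y, if g p.1 = true then (D {p}).toReal * ℓ (f p.1) p.2 else 0

section

variable {X Y : Type} [Fintype X] [Fintype Y] [MeasurableSpace (X × Y)]
  (D : Measure (X × Y)) (ℓ : Y → Y → ℝ)

theorem groupMeasure_mul_condLoss {g : X → Bool} (hg : groupMeasure D g ≠ 0) (f : X → Y) :
    groupMeasure D g * condLoss D ℓ f g = groupLoss D ℓ f g :=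
  mul_div_cancel₀ _ hg

theorem totalLoss_sub_totalLoss_listUpdate (f h : X → Y) (g : X → Bool) :
    totalLoss D ℓ f - totalLoss D ℓ (listUpdate f h g) = groupLoss D ℓ f g - groupLoss D ℓ h g := by
  simp only [totalLoss, groupLoss, ← Finset.sum_sub_distrib]
  refine Finset.sum_congr rfl fun p _ => ?_
  cases hg : g p.1 <;> simp [listUpdate, hg]

end

theorem stmt_6_general {X Y : Type} [Fintype X] [Fintype Y] [MeasurableSpace (X × Y)]
    (D : Measure (X × Y)) (ℓ : Y → Y → ℝ)
    (f h : X → Y) (g : X → Bool) (μ Δ : ℝ) (hμ : 0 < μ) (hΔ : 0 < Δ)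
    (hcert : IsCertificate D ℓ f g h μ Δ) :
    totalLoss D ℓ (listUpdate f h g) ≤ totalLoss D ℓ f - μ * Δ := by
  obtain ⟨hμm, hcond⟩ := hcert
  have hm : groupMeasure D g ≠ 0 := (hμ.trans_le hμm).ne'
  have hgain : totalLoss D ℓ f - totalLoss D ℓ (listUpdate f h g)
      = groupMeasure D g * (condLoss D ℓ f g - condLoss D ℓ h g) := by
    rw [totalLoss_sub_totalLoss_listUpdate, mul_sub, groupMeasure_mul_condLoss D ℓ hm,
      groupMeasure_mul_condLoss D ℓ hm]
  have hbound : μ * Δ ≤ groupMeasure D g * (condLoss D ℓ f g - condLoss D ℓ h g) :=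
    mul_le_mul hμm (by linarith) hΔ.le (hμ.le.trans hμm)
  linarith

/-- updating with a `(μ,Δ)`-certificate of sub-optimality decreases the
overall loss by at least `μ·Δ`. -/
theorem stmt_6 {X Y : Type} [Fintype X] [Fintype Y] [Nonempty X] [Nonempty Y]
    [MeasurableSpace (X × Y)] [MeasurableSingletonClass (X × Y)]
    (D : Measure (X × Y)) [IsProbabilityMeasure D]
    (ℓ : Y → Y → ℝ) (hℓ : ∀ yhat y : Y, 0 ≤ ℓ yhat y ∧ ℓ yhat y ≤ 1)
    (f h : X → Y) (g : X → Bool) (μ Δ : ℝ) (hμ : 0 < μ) (hΔ : 0 < Δ)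
    (hcert : IsCertificate D ℓ f g h μ Δ) :
    totalLoss D ℓ (listUpdate f h g) ≤ totalLoss D ℓ f - μ * Δ :=
  stmt_6_general D ℓ f h g μ Δ hμ hΔ hcert
end

section
/- Let f : X → Bool be a model and K a set of ternary models p : X → Option Bool. If p* ∈ K minimizes the expected induced cost E_{(x,y)∼D}[c^f_{(x,y)}(p x)] over p ∈ K, then p* maximizes E_{(x,y)∼D}[1[g_p x = true]·(1[f x ≠ y] − 1[h_p x ≠ y])] over p ∈ K; consequently, for every p ∈ K with μ_{g_p}(D) > 0 and μ_{g_{p*}}(D) > 0, μ_{g_{p*}}(D)·(L(D,f,g_{p*}) − L(D,h_{p*},g_{p*})) ≥ μ_{g_p}(D)·(L(D,f,g_p) − L(D,h_p,g_p)). -/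
open MeasureTheory

/-- The 0-1 loss on binary labels: `ℓ(yhat, y) = 1[yhat ≠ y]`. -/
noncomputable def loss01 : Bool → Bool → ℝ := fun a b => if a ≠ b then 1 else 0

/-- The group derived from a ternary model `p : X → Option Bool`:
`g_p x = true` iff `p x ≠ none` (i.e. `p` does not defer on `x`). -/
def derivedGroup {X : Type} (p : X → Option Bool) : X → Bool := fun x => (p x).isSome

/-- The model derived from a ternary model `p`: `h_p x = b` if `p x = some b`, and
`h_p x = false` if `p x = none`. -/
def derivedModel {X : Type} (p : X → Option Bool) : X → Bool := fun x => (p x).getD false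

/-- The induced costs of a model `f`: deferring costs `0`; predicting `b` costs `1` if `f`
is right and `b` is wrong, `−1` if `b` is right and `f` is wrong, and `0` otherwise. -/
noncomputable def inducedCost {X : Type} (f : X → Bool) (xy : X × Bool) : Option Bool → ℝ
  | none => 0
  | some b =>
      if f xy.1 = xy.2 ∧ b ≠ xy.2 then 1
      else if b = xy.2 ∧ f xy.1 ≠ xy.2 then -1
      else 0

/-!
Pointwise, the induced cost of `p x` is exactly minus the gain
`1[g_p x] · (1[f x ≠ y] − 1[h_p x ≠ y])` of replacing `f` by `h_p` on `g_p`, so minimizing the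
expected cost maximizes the expected gain. On a group of positive mass that expected gain is
`μ_g(D) · (L(D,f,g) − L(D,h_p,g))`, since the factor `μ_g(D)` cancels the normalization of
the conditional losses.
-/

section

variable {X : Type}

noncomputable def deferralGain (f : X → Bool) (p : X → Option Bool) (q : X × Bool) : ℝ :=
  if derivedGroup p q.1 = true then loss01 (f q.1) q.2 - loss01 (derivedModel p q.1) q.2 else 0

theorem inducedCost_apply_eq_neg_deferralGain (f : X → Bool) (p : X → Option Bool)
    (q : X × Bool) : inducedCost f q (p q.1) = -deferralGain f p q := by
  unfold deferralGain derivedGroup derivedModel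
  rcases p q.1 with _ | b
  · simp [inducedCost]
  · obtain ⟨x, y⟩ := q
    cases b <;> cases y <;> cases hf : f x <;> norm_num [inducedCost, loss01, hf]

theorem sum_deferralGain_eq_neg_sum_inducedCost [Fintype X] [MeasurableSpace (X × Bool)]
    (D : Measure (X × Bool)) (f : X → Bool) (p : X → Option Bool) :
    ∑ q : X × Bool, (D {q}).toReal * deferralGain f p q
      = -∑ q : X × Bool, (D {q}).toReal * inducedCost f q (p q.1) := by
  simp only [inducedCost_apply_eq_neg_deferralGain, mul_neg, Finset.sum_neg_distrib, neg_neg]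

end

theorem groupMeasure_mul_sub_condLoss {X Y : Type} [Fintype X] [Fintype Y]
    [MeasurableSpace (X × Y)] (D : Measure (X × Y)) (ℓ : Y → Y → ℝ) (f f' : X → Y)
    (g : X → Bool) (hg : groupMeasure D g ≠ 0) :
    groupMeasure D g * (condLoss D ℓ f g - condLoss D ℓ f' g)
      = ∑ q : X × Y, (D {q}).toReal *
          (if g q.1 = true then ℓ (f q.1) q.2 - ℓ (f' q.1) q.2 else 0) := by
  rw [condLoss, condLoss, div_sub_div_same, mul_div_cancel₀ _ hg, ← Finset.sum_sub_distrib]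
  refine Finset.sum_congr rfl fun q _ => ?_
  split_ifs <;> ring

theorem stmt_12_general {X : Type} [Fintype X]
    [MeasurableSpace (X × Bool)]
    (D : Measure (X × Bool))
    (f : X → Bool) (K : Set (X → Option Bool))
    (pstar : X → Option Bool)
    (hmin : ∀ p ∈ K,
      (∑ q : X × Bool, (D {q}).toReal * inducedCost f q (pstar q.1))
        ≤ ∑ q : X × Bool, (D {q}).toReal * inducedCost f q (p q.1)) :
    (∀ p ∈ K,
        (∑ q : X × Bool, (D {q}).toReal *
          (if derivedGroup p q.1 = true then
             (if f q.1 ≠ q.2 then (1 : ℝ) else 0)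
               - (if derivedModel p q.1 ≠ q.2 then (1 : ℝ) else 0)
           else 0))
        ≤ ∑ q : X × Bool, (D {q}).toReal *
          (if derivedGroup pstar q.1 = true then
             (if f q.1 ≠ q.2 then (1 : ℝ) else 0)
               - (if derivedModel pstar q.1 ≠ q.2 then (1 : ℝ) else 0)
           else 0))
    ∧ (∀ p ∈ K, 0 < groupMeasure D (derivedGroup p) →
        0 < groupMeasure D (derivedGroup pstar) →
        groupMeasure D (derivedGroup p) *
            (condLoss D loss01 f (derivedGroup p)
              - condLoss D loss01 (derivedModel p) (derivedGroup p))
          ≤ groupMeasure D (derivedGroup pstar) *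
              (condLoss D loss01 f (derivedGroup pstar)
                - condLoss D loss01 (derivedModel pstar) (derivedGroup pstar))) := by
  have hmax : ∀ p ∈ K, ∑ q : X × Bool, (D {q}).toReal * deferralGain f p q
      ≤ ∑ q : X × Bool, (D {q}).toReal * deferralGain f pstar q := fun p hp => by
    simpa only [sum_deferralGain_eq_neg_sum_inducedCost, neg_le_neg_iff] using hmin p hp
  refine ⟨hmax, fun p hp hμp hμstar => ?_⟩
  rw [groupMeasure_mul_sub_condLoss D loss01 _ _ _ hμp.ne',
    groupMeasure_mul_sub_condLoss D loss01 _ _ _ hμstar.ne']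
  exact hmax p hp

/-- a minimizer `p*` over `K` of the expected induced cost maximizes
`E[1[g_p x]·(1[f x ≠ y] − 1[h_p x ≠ y])]` over `K`; consequently it maximizes
`μ_{g_p}(D)·(L(D,f,g_p) − L(D,h_p,g_p))` among `p ∈ K` whose derived group has positive
measure (`p*`'s included). -/
theorem stmt_12 {X : Type} [Fintype X] [Nonempty X]
    [MeasurableSpace (X × Bool)] [MeasurableSingletonClass (X × Bool)]
    (D : Measure (X × Bool)) [IsProbabilityMeasure D]
    (f : X → Bool) (K : Set (X → Option Bool))
    (pstar : X → Option Bool) (hmem : pstar ∈ K)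
    (hmin : ∀ p ∈ K,
      (∑ q : X × Bool, (D {q}).toReal * inducedCost f q (pstar q.1))
        ≤ ∑ q : X × Bool, (D {q}).toReal * inducedCost f q (p q.1)) :
    (∀ p ∈ K,
        (∑ q : X × Bool, (D {q}).toReal *
          (if derivedGroup p q.1 = true then
             (if f q.1 ≠ q.2 then (1 : ℝ) else 0)
               - (if derivedModel p q.1 ≠ q.2 then (1 : ℝ) else 0)
           else 0))
        ≤ ∑ q : X × Bool, (D {q}).toReal *
          (if derivedGroup pstar q.1 = true then
             (if f q.1 ≠ q.2 then (1 : ℝ) else 0)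
               - (if derivedModel pstar q.1 ≠ q.2 then (1 : ℝ) else 0)
           else 0))
    ∧ (∀ p ∈ K, 0 < groupMeasure D (derivedGroup p) →
        0 < groupMeasure D (derivedGroup pstar) →
        groupMeasure D (derivedGroup p) *
            (condLoss D loss01 f (derivedGroup p)
              - condLoss D loss01 (derivedModel p) (derivedGroup p))
          ≤ groupMeasure D (derivedGroup pstar) *
              (condLoss D loss01 f (derivedGroup pstar)
                - condLoss D loss01 (derivedModel pstar) (derivedGroup pstar))) :=
  stmt_12_general D f K pstar hmin
end

section
/- Let D = ((x_1,y_1),…,(x_n,y_n)) be a dataset of size n ≥ 1 with binary labels and 0-1 loss, and let f, h : X → Bool be models. Let I¹ := {i : h x_i = y_i and f x_i ≠ y_i}, I⁰ := {i : h x_i ≠ y_i and f x_i = y_i}, m := |I¹| + |I⁰|, and assume m > 0. Let D_h be the dataset of size m consisting of the relabeled examples (x_i, true) for i ∈ I¹ and (x_i, false) for i ∈ I⁰. Then for every group g : X → Bool: (i) Σ_{i=1}^n 1[g x_i = true]·(1[f x_i ≠ y_i] − 1[h x_i ≠ y_i]) = |{i ∈ I¹ : g x_i = true}| − |{i ∈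 I⁰ : g x_i = true}|, and (ii) m · L(D_h, g) = |I¹| − |{i ∈ I¹ : g x_i = true}| + |{i ∈ I⁰ : g x_i = true}|, where L(D_h, g) is the empirical 0-1 loss of g, viewed as a Bool-valued predictor, on the dataset D_h. -/
/-! Both identities are counting arguments. In (i) the examples on which `f` and `h` are both
wrong or both right cancel, leaving `I¹` with sign `+` and `I⁰` with sign `-`. In (ii),
`m · L(D_h, g)` is the number of mistakes of `g` on `D_h`: the examples of `I¹` outside the
group and those of `I⁰` inside it. -/

/-- The empirical 0-1 loss of a Bool-valued predictor `g` on a dataset of labelled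
examples given as a multiset: `L(S,g) = (Σ_{(x,y) ∈ S} 1[g x ≠ y]) / |S|`. -/
noncomputable def msLoss {X : Type} (S : Multiset (X × Bool)) (g : X → Bool) : ℝ :=
  (S.map fun q => if g q.1 ≠ q.2 then (1 : ℝ) else 0).sum / (Multiset.card S : ℝ)

theorem Multiset.sum_map_boole {α R : Type*} [AddCommMonoidWithOne R] (S : Multiset α)
    (p : α → Prop) [DecidablePred p] :
    (S.map fun a => if p a then (1 : R) else 0).sum = (Multiset.card (S.filter p) : R) := by
  induction S using Multiset.induction_on with
  | empty => simp
  | cons a S ih => by_cases ha : p a <;> simp [ha, ih, add_comm]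

theorem card_mul_msLoss {X : Type} (S : Multiset (X × Bool)) (g : X → Bool) :
    (Multiset.card S : ℝ) * msLoss S g = (Multiset.card (S.filter fun q => g q.1 ≠ q.2) : ℝ) := by
  rw [msLoss, Multiset.sum_map_boole]
  rcases eq_or_ne (Multiset.card S : ℝ) 0 with hS | hS
  · simp [Multiset.card_eq_zero.mp (by exact_mod_cast hS)]
  · exact mul_div_cancel₀ _ hS

theorem card_filter_relabel {ι X : Type*} (s : Finset ι) (x : ι → X) (b : Bool) (g : X → Bool) :
    Multiset.card ((s.val.map fun i => (x i, b)).filter fun q => g q.1 ≠ q.2)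
      = (s.filter fun i => g (x i) ≠ b).card := by
  rw [Multiset.filter_map, Multiset.card_map]
  rfl

theorem sum_ite_boole_sub_boole {ι : Type*} (s : Finset ι) (g p q : ι → Prop)
    [DecidablePred g] [DecidablePred p] [DecidablePred q] :
    (∑ i ∈ s, if g i then (if p i then (1 : ℝ) else 0) - (if q i then (1 : ℝ) else 0) else 0)
      = ((s.filter fun i => (¬q i ∧ p i) ∧ g i).card : ℝ)
          - ((s.filter fun i => (q i ∧ ¬p i) ∧ g i).card : ℝ) := by
  rw [← Finset.sum_boole, ← Finset.sum_boole, ← Finset.sum_sub_distrib]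
  refine Finset.sum_congr rfl fun i _ => ?_
  by_cases hg : g i <;> by_cases hp : p i <;> by_cases hq : q i <;> simp [hg, hp, hq]

theorem stmt_14_general {X : Type} (n : ℕ) (D : Fin n → X × Bool) (f h : X → Bool)
    (I1 I0 : Finset (Fin n))
    (hI1 : I1 = Finset.univ.filter fun i => h (D i).1 = (D i).2 ∧ f (D i).1 ≠ (D i).2)
    (hI0 : I0 = Finset.univ.filter fun i => h (D i).1 ≠ (D i).2 ∧ f (D i).1 = (D i).2)
    (m : ℕ) (hm : m = I1.card + I0.card)
    (Dh : Multiset (X × Bool))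
    (hDh : Dh = I1.val.map (fun i => ((D i).1, true))
              + I0.val.map (fun i => ((D i).1, false))) :
    ∀ g : X → Bool,
      ((∑ i : Fin n, if g (D i).1 = true then
            (if f (D i).1 ≠ (D i).2 then (1 : ℝ) else 0)
              - (if h (D i).1 ≠ (D i).2 then (1 : ℝ) else 0)
          else 0)
        = ((I1.filter fun i => g (D i).1 = true).card : ℝ)
            - ((I0.filter fun i => g (D i).1 = true).card : ℝ))
      ∧ ((m : ℝ) * msLoss Dh g
          = (I1.card : ℝ) - ((I1.filter fun i => g (D i).1 = true).card : ℝ)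
              + ((I0.filter fun i => g (D i).1 = true).card : ℝ)) := by
  intro g
  constructor
  · rw [sum_ite_boole_sub_boole, hI1, hI0]
    simp only [Finset.filter_filter, ne_eq, not_not]
  · have hcard : (Multiset.card Dh : ℝ) = m := by
      simp [hDh, hm]
    have hsplit := Finset.card_filter_add_card_filter_not (s := I1) fun i => g (D i).1 = true
    rw [← hcard, card_mul_msLoss, hDh, Multiset.filter_add, Multiset.card_add,
      card_filter_relabel, card_filter_relabel, ← hsplit]
    simp only [ne_eq, Bool.not_eq_false, Nat.cast_add]
    ring

/-- with `I¹ = {i : h x_i = y_i ≠ f x_i}`, `I⁰ = {i : h x_i ≠ y_i = f x_i}`,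
`m = |I¹| + |I⁰| > 0`, and `D_h` the relabeled dataset `{(x_i, true) : i ∈ I¹} ∪
{(x_i, false) : i ∈ I⁰}`, for every group `g`:
(i) `Σ_i 1[g x_i]·(1[f x_i ≠ y_i] − 1[h x_i ≠ y_i]) = |{i ∈ I¹ : g x_i}| − |{i ∈ I⁰ : g x_i}|`,
and (ii) `m·L(D_h, g) = |I¹| − |{i ∈ I¹ : g x_i}| + |{i ∈ I⁰ : g x_i}|`. -/
theorem stmt_14 {X : Type} (n : ℕ) (hn : 1 ≤ n) (D : Fin n → X × Bool) (f h : X → Bool)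
    (I1 I0 : Finset (Fin n))
    (hI1 : I1 = Finset.univ.filter fun i => h (D i).1 = (D i).2 ∧ f (D i).1 ≠ (D i).2)
    (hI0 : I0 = Finset.univ.filter fun i => h (D i).1 ≠ (D i).2 ∧ f (D i).1 = (D i).2)
    (m : ℕ) (hm : m = I1.card + I0.card) (hmpos : 0 < m)
    (Dh : Multiset (X × Bool))
    (hDh : Dh = I1.val.map (fun i => ((D i).1, true))
              + I0.val.map (fun i => ((D i).1, false))) :
    ∀ g : X → Bool,
      ((∑ i : Fin n, if g (D i).1 = true then
            (if f (D i).1 ≠ (D i).2 then (1 : ℝ) else 0)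
              - (if h (D i).1 ≠ (D i).2 then (1 : ℝ) else 0)
          else 0)
        = ((I1.filter fun i => g (D i).1 = true).card : ℝ)
            - ((I0.filter fun i => g (D i).1 = true).card : ℝ))
      ∧ ((m : ℝ) * msLoss Dh g
          = (I1.card : ℝ) - ((I1.filter fun i => g (D i).1 = true).card : ℝ)
              + ((I0.filter fun i => g (D i).1 = true).card : ℝ)) :=
  stmt_14_general n D f h I1 I0 hI1 hI0 m hm Dh hDh
end

section
/- Let D = ((x_1,y_1),…,(x_n,y_n)) be a dataset of size n ≥ 1 with binary labels and 0-1 loss, and let f, h : X → Bool be models. Let I¹ := {i : h x_i = y_i and f x_i ≠ y_i}, I⁰ := {i : h x_i ≠ y_i and f x_i = y_i}, assume |I¹| + |I⁰| > 0, and let D_h be the dataset consisting of the relabeled examples (x_i, true) for i ∈ I¹ and (x_i, false) for i ∈ I⁰. Let G be a set of groups. If g* ∈ G minimizes the empirical 0-1 loss L(D_h, g) over g ∈ G (viewing each g as a Bool-valued predictor on D_h), then g* maximizes Φ(g) := (1/n) Σ_{i=1}^n 1[g x_i = true]·(1[f x_i ≠ y_i] − 1[h x_i ≠ y_i]) over g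 ∈ G; in particular, for every g ∈ G such that both {i : g x_i = true} and {i : g* x_i = true} are nonempty, μ_D(g*)·(L(D,f,g*) − L(D,h,g*)) ≥ μ_D(g)·(L(D,f,g) − L(D,h,g)). -/
/-- The empirical measure of a group `g` on a dataset `D`: `μ_D(g) = |{i : g x_i = true}|/n`. -/
noncomputable def empMeasure {X : Type} {n : ℕ} (D : Fin n → X × Bool) (g : X → Bool) : ℝ :=
  ((Finset.univ.filter fun i => g (D i).1 = true).card : ℝ) / n

/-- The empirical group-conditional 0-1 loss
`L(D,f,g) = (Σ_{i : g x_i = true} 1[f x_i ≠ y_i]) / |{i : g x_i = true}|`. -/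
noncomputable def empCondLoss {X : Type} {n : ℕ} (D : Fin n → X × Bool)
    (f : X → Bool) (g : X → Bool) : ℝ :=
  (∑ i ∈ Finset.univ.filter (fun i => g (D i).1 = true),
      (if f (D i).1 ≠ (D i).2 then (1 : ℝ) else 0))
    / ((Finset.univ.filter fun i => g (D i).1 = true).card : ℝ)

/-- `Φ(g) = (1/n) Σ_i 1[g x_i]·(1[f x_i ≠ y_i] − 1[h x_i ≠ y_i])`. -/
noncomputable def Phi {X : Type} {n : ℕ} (D : Fin n → X × Bool) (f h : X → Bool)
    (g : X → Bool) : ℝ :=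
  (1 / n : ℝ) * ∑ i : Fin n,
    if g (D i).1 = true then
      (if f (D i).1 ≠ (D i).2 then (1 : ℝ) else 0)
        - (if h (D i).1 ≠ (D i).2 then (1 : ℝ) else 0)
    else 0

/-!
Pointwise, `1[f x ≠ y] − 1[h x ≠ y]` is `+1` on `I¹`, `−1` on `I⁰` and `0` elsewhere, so
`n·Φ(g) = |{i ∈ I¹ | g x_i}| − |{i ∈ I⁰ | g x_i}|`. On `D_h` the predictor `g` errs exactly on the
points of `I¹` outside `g` and the points of `I⁰` inside `g`, so `|D_h|·L(D_h, g) = |I¹| − n·Φ(g)`: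
minimising the relabeled loss maximises `Φ`. Finally `μ_D(g)·(L(D,f,g) − L(D,h,g)) = Φ(g)`, because
the normalisation by `|{i | g x_i}|` in the conditional losses cancels against `μ_D(g)`.
-/

open Finset

section

variable {X : Type} {n : ℕ}

def fixedSet (D : Fin n → X × Bool) (f h : X → Bool) : Finset (Fin n) :=
  univ.filter fun i => h (D i).1 = (D i).2 ∧ f (D i).1 ≠ (D i).2

def brokenSet (D : Fin n → X × Bool) (f h : X → Bool) : Finset (Fin n) :=
  univ.filter fun i => h (D i).1 ≠ (D i).2 ∧ f (D i).1 = (D i).2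

def relabeled (D : Fin n → X × Bool) (I1 I0 : Finset (Fin n)) : Multiset (X × Bool) :=
  I1.val.map (fun i => ((D i).1, true)) + I0.val.map (fun i => ((D i).1, false))

theorem ite_not_sub_ite_not {R : Type*} [Ring R] (P Q : Prop) [Decidable P] [Decidable Q] :
    ((if ¬P then 1 else 0) - (if ¬Q then 1 else 0) : R)
      = (if Q ∧ ¬P then 1 else 0) - (if ¬Q ∧ P then 1 else 0) := by
  by_cases hP : P <;> by_cases hQ : Q <;> simp [hP, hQ]

theorem msLoss_mul_card (S : Multiset (X × Bool)) (g : X → Bool) :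
    msLoss S g * Multiset.card S = (S.map fun q => if g q.1 ≠ q.2 then (1 : ℝ) else 0).sum := by
  rcases eq_or_ne S 0 with rfl | hS
  · simp
  · exact div_mul_cancel₀ _ (by simpa using hS)

theorem msLoss_relabeled_mul_card (D : Fin n → X × Bool) (I1 I0 : Finset (Fin n))
    (g : X → Bool) :
    msLoss (relabeled D I1 I0) g * (#I1 + #I0)
      = #I1 - #{i ∈ I1 | g (D i).1} + #{i ∈ I0 | g (D i).1} := by
  have hcard := msLoss_mul_card (relabeled D I1 I0) g
  simp only [relabeled, Multiset.card_add, Multiset.card_map, Finset.card_val,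
    Nat.cast_add] at hcard
  rw [relabeled, hcard, Multiset.map_add, Multiset.sum_add, Multiset.map_map, Multiset.map_map]
  change ∑ i ∈ I1, (if g (D i).1 ≠ true then (1 : ℝ) else 0)
    + ∑ i ∈ I0, (if g (D i).1 ≠ false then (1 : ℝ) else 0) = _
  simp only [ne_eq, Bool.not_eq_true, Bool.not_eq_false, sum_boole]
  have hsplit := card_filter_add_card_filter_not (s := I1) (fun i => g (D i).1 = true)
  simp only [Bool.not_eq_true] at hsplit
  rw [← hsplit]
  push_cast
  ring

theorem Phi_eq (D : Fin n → X × Bool) (f h g : X → Bool) :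
    Phi D f h g = ((#{i ∈ fixedSet D f h | g (D i).1} : ℝ)
      - #{i ∈ brokenSet D f h | g (D i).1}) / n := by
  have hterm : ∀ i, (if g (D i).1 = true then
        (if f (D i).1 ≠ (D i).2 then (1 : ℝ) else 0) - (if h (D i).1 ≠ (D i).2 then 1 else 0)
        else 0)
      = (if i ∈ {j ∈ fixedSet D f h | g (D j).1} then 1 else 0)
        - (if i ∈ {j ∈ brokenSet D f h | g (D j).1} then 1 else 0) := by
    intro i
    by_cases hg : g (D i).1
    · simpa [hg, fixedSet, brokenSet] using ite_not_sub_ite_not (R := ℝ) _ _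
    · simp [hg]
  rw [Phi, Finset.sum_congr rfl fun i _ => hterm i, sum_sub_distrib, sum_boole, sum_boole,
    one_div_mul_eq_div, filter_mem_eq_inter, filter_mem_eq_inter, univ_inter, univ_inter]

theorem Phi_le_Phi_of_msLoss_relabeled_le (D : Fin n → X × Bool) (f h g g' : X → Bool)
    (hle : msLoss (relabeled D (fixedSet D f h) (brokenSet D f h)) g'
      ≤ msLoss (relabeled D (fixedSet D f h) (brokenSet D f h)) g) :
    Phi D f h g ≤ Phi D f h g' := by
  have hscaled := mul_le_mul_of_nonneg_right hle
    (by positivity : (0 : ℝ) ≤ #(fixedSet D f h) + #(brokenSet D f h))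
  rw [msLoss_relabeled_mul_card, msLoss_relabeled_mul_card] at hscaled
  rw [Phi_eq, Phi_eq]
  gcongr ?_ / _
  linarith

theorem empMeasure_mul_sub_empCondLoss (D : Fin n → X × Bool) (f h g : X → Bool)
    (hg : (univ.filter fun i => g (D i).1 = true).Nonempty) :
    empMeasure D g * (empCondLoss D f g - empCondLoss D h g) = Phi D f h g := by
  have hcard : (#(univ.filter fun i => g (D i).1 = true) : ℝ) ≠ 0 := by
    exact_mod_cast hg.card_pos.ne'
  rw [empMeasure, empCondLoss, empCondLoss, div_sub_div_same, ← sum_sub_distrib, Phi,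
    ← sum_filter]
  field_simp

end

theorem stmt_15_general {X : Type} (n : ℕ) (D : Fin n → X × Bool) (f h : X → Bool)
    (I1 I0 : Finset (Fin n))
    (hI1 : I1 = Finset.univ.filter fun i => h (D i).1 = (D i).2 ∧ f (D i).1 ≠ (D i).2)
    (hI0 : I0 = Finset.univ.filter fun i => h (D i).1 ≠ (D i).2 ∧ f (D i).1 = (D i).2)
    (Dh : Multiset (X × Bool))
    (hDh : Dh = I1.val.map (fun i => ((D i).1, true))
              + I0.val.map (fun i => ((D i).1, false)))
    (G : Set (X → Bool)) (gstar : X → Bool)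
    (hmin : ∀ g ∈ G, msLoss Dh gstar ≤ msLoss Dh g) :
    (∀ g ∈ G, Phi D f h g ≤ Phi D f h gstar)
    ∧ (∀ g ∈ G,
        (Finset.univ.filter fun i => g (D i).1 = true).Nonempty →
        (Finset.univ.filter fun i => gstar (D i).1 = true).Nonempty →
        empMeasure D g * (empCondLoss D f g - empCondLoss D h g)
          ≤ empMeasure D gstar * (empCondLoss D f gstar - empCondLoss D h gstar)) := by
  obtain rfl : I1 = fixedSet D f h := hI1
  obtain rfl : I0 = brokenSet D f h := hI0
  obtain rfl : Dh = relabeled D (fixedSet D f h) (brokenSet D f h) := hDh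
  have hmax : ∀ g ∈ G, Phi D f h g ≤ Phi D f h gstar := fun g hg =>
    Phi_le_Phi_of_msLoss_relabeled_le D f h g gstar (hmin g hg)
  refine ⟨hmax, fun g hg hne hne_star => ?_⟩
  rw [empMeasure_mul_sub_empCondLoss D f h g hne,
    empMeasure_mul_sub_empCondLoss D f h gstar hne_star]
  exact hmax g hg

/-- a minimizer `g*` over `G` of the empirical 0-1 loss on the relabeled
dataset `D_h` maximizes `Φ(g)` over `G`; in particular, for groups nonempty on the data,
`μ_D(g*)·(L(D,f,g*) − L(D,h,g*)) ≥ μ_D(g)·(L(D,f,g) − L(D,h,g))`. -/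
theorem stmt_15 {X : Type} (n : ℕ) (hn : 1 ≤ n) (D : Fin n → X × Bool) (f h : X → Bool)
    (I1 I0 : Finset (Fin n))
    (hI1 : I1 = Finset.univ.filter fun i => h (D i).1 = (D i).2 ∧ f (D i).1 ≠ (D i).2)
    (hI0 : I0 = Finset.univ.filter fun i => h (D i).1 ≠ (D i).2 ∧ f (D i).1 = (D i).2)
    (hmpos : 0 < I1.card + I0.card)
    (Dh : Multiset (X × Bool))
    (hDh : Dh = I1.val.map (fun i => ((D i).1, true))
              + I0.val.map (fun i => ((D i).1, false)))
    (G : Set (X → Bool)) (gstar : X → Bool) (hmemG : gstar ∈ G)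
    (hmin : ∀ g ∈ G, msLoss Dh gstar ≤ msLoss Dh g) :
    (∀ g ∈ G, Phi D f h g ≤ Phi D f h gstar)
    ∧ (∀ g ∈ G,
        (Finset.univ.filter fun i => g (D i).1 = true).Nonempty →
        (Finset.univ.filter fun i => gstar (D i).1 = true).Nonempty →
        empMeasure D g * (empCondLoss D f g - empCondLoss D h g)
          ≤ empMeasure D gstar * (empCondLoss D f gstar - empCondLoss D h gstar)) :=
  stmt_15_general n D f h I1 I0 hI1 hI0 Dh hDh G gstar hmin
end
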